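/- Let u, v be elements of an algebra with c := [u,v]/(q-q^{-1}) satisfying uc = q^2 cu and cv = q^2 vc. Then, as formal power series, Ψ^q(v)^{-1} u Ψ^q(v) = u + c and Ψ^q(u) v Ψ^q(u)^{-1} = v + c. -/

import Mathlib

/- STATEMENT 2: generalized quantum dilogarithm conjugation.
With `c := [u,v]/(q-q⁻¹)` satisfying `uc = q²cu` and `cv = q²vc`, we have
`Ψ^q(v)⁻¹ u Ψ^q(v) = u + c` and `Ψ^q(u) v Ψ^q(u)⁻¹ = v + c`, as formal power
series (the formal variable of `PowerSeries A` tracks the power of the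
dilogarithm argument; `c` contains that argument once, hence appears in degree 1).
Both identities are stated in the equivalent inverse-free form. -/

noncomputable section

/-- The field `ℂ(q)` of rational functions, with `q` the formal parameter. -/
abbrev Kq : Type := RatFunc ℂ

/-- The formal parameter `q`. -/
def qq : Kq := RatFunc.X

/-- Coefficient of `x^k` in `Ψ^q(x) = ∏_{r≥0}(1+q^{2r+1}x)⁻¹`. -/
def psiCoeff (k : ℕ) : Kq :=
  (-qq) ^ k / ∏ j ∈ Finset.range k, (1 - qq ^ (2 * (j + 1)))

/-- The quantum dilogarithm `Ψ^q(x)` of an algebra element `x`, as a formal power series. -/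
def Psi {A : Type} [Ring A] [Algebra Kq A] (x : A) : PowerSeries A :=
  PowerSeries.mk fun k => psiCoeff k • x ^ k

/-! Since `u v = v u + (q - q⁻¹) c` and `c v = q² v c`, moving `u` past `v ^ (n + 1)` leaves
the correction `(q - q⁻¹) (1 + q² + ⋯ + q²ⁿ) vⁿ c = q⁻¹ (q^(2(n+1)) - 1) vⁿ c`, and this factor
is exactly `psiCoeff n / psiCoeff (n + 1)`. Hence the degree `n + 1` coefficients of `u Ψ(v)` and
`Ψ(v) (u + X c)` agree. Passing to the opposite algebra gives the mirrored relation for powers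
of `u`, and with it the second identity. -/

open PowerSeries
open Finset (range)

section TwistedCommutation

variable {K A : Type*} [CommRing K] [Ring A] [Algebra K A] {u v c : A} {a t : K}

theorem mul_pow_succ_of_twisted_comm (huv : u * v = v * u + a • c)
    (hcv : c * v = t • (v * c)) (n : ℕ) :
    u * v ^ (n + 1) = v ^ (n + 1) * u + (a * ∑ i ∈ range (n + 1), t ^ i) • (v ^ n * c) := by
  induction n with
  | zero => simpa using huv
  | succ n ih =>
    calc u * v ^ (n + 2) = (u * v ^ (n + 1)) * v := by rw [mul_assoc, ← pow_succ]
      _ = v ^ (n + 1) * (u * v) + (a * ∑ i ∈ range (n + 1), t ^ i) • (v ^ n * (c * v)) := by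
        rw [ih, add_mul, smul_mul_assoc, mul_assoc, mul_assoc]
      _ = v ^ (n + 2) * u + (a * ∑ i ∈ range (n + 2), t ^ i) • (v ^ (n + 1) * c) := by
        rw [huv, hcv, mul_add, mul_smul_comm, mul_smul_comm, smul_smul, ← mul_assoc,
          ← mul_assoc, ← pow_succ, ← pow_succ, add_assoc, ← add_smul, geom_sum_succ (n := n + 1)]
        congr 2
        ring

theorem pow_succ_mul_of_twisted_comm (huv : u * v = v * u + a • c)
    (huc : u * c = t • (c * u)) (n : ℕ) :
    u ^ (n + 1) * v = v * u ^ (n + 1) + (a * ∑ i ∈ range (n + 1), t ^ i) • (c * u ^ n) := by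
  have h := mul_pow_succ_of_twisted_comm (u := MulOpposite.op v) (v := MulOpposite.op u)
    (c := MulOpposite.op c) (a := a) (t := t) (by simp [← MulOpposite.op_mul, huv, add_comm])
    (by simp [← MulOpposite.op_mul, huc]) n
  simpa [← MulOpposite.op_mul, ← MulOpposite.op_pow, ← MulOpposite.op_smul,
    ← MulOpposite.op_add] using h

variable {f : ℕ → K}

theorem C_mul_mk_smul_pow (huv : u * v = v * u + a • c) (hcv : c * v = t • (v * c))
    (hf : ∀ n, f (n + 1) * (a * ∑ i ∈ range (n + 1), t ^ i) = f n) :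
    C u * mk (fun k ↦ f k • v ^ k) = mk (fun k ↦ f k • v ^ k) * (C u + X * C c) := by
  ext n
  rw [coeff_C_mul, mul_add, map_add, coeff_mul_C, ← (commute_X (C c)).eq, ← mul_assoc]
  cases n with
  | zero => simp
  | succ n =>
    rw [coeff_succ_mul_X, coeff_mul_C, coeff_mk, coeff_mk, mul_smul_comm,
      mul_pow_succ_of_twisted_comm huv hcv, smul_add, smul_smul, hf, smul_mul_assoc,
      smul_mul_assoc]

theorem mk_smul_pow_mul_C (huv : u * v = v * u + a • c) (huc : u * c = t • (c * u))
    (hf : ∀ n, f (n + 1) * (a * ∑ i ∈ range (n + 1), t ^ i) = f n) :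
    mk (fun k ↦ f k • u ^ k) * C v = (C v + X * C c) * mk (fun k ↦ f k • u ^ k) := by
  ext n
  rw [coeff_mul_C, add_mul, map_add, coeff_C_mul, mul_assoc]
  cases n with
  | zero => simp
  | succ n =>
    rw [coeff_succ_X_mul, coeff_C_mul, coeff_mk, coeff_mk, smul_mul_assoc,
      pow_succ_mul_of_twisted_comm huv huc, smul_add, smul_smul, hf, mul_smul_comm,
      mul_smul_comm]

end TwistedCommutation

theorem qq_ne_zero : qq ≠ 0 := RatFunc.X_ne_zero

theorem qq_pow_ne_one {m : ℕ} (hm : 0 < m) : qq ^ m ≠ 1 := fun h ↦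
  (RatFunc.transcendental_X.pow hm) (h ▸ isAlgebraic_one)

theorem qq_sub_inv_ne_zero : qq - qq⁻¹ ≠ 0 := by
  rw [sub_ne_zero]
  intro h
  apply qq_pow_ne_one two_pos
  rw [sq]
  nth_rewrite 2 [h]
  exact mul_inv_cancel₀ qq_ne_zero

theorem psiCoeff_succ_mul (n : ℕ) :
    psiCoeff (n + 1) * ((qq - qq⁻¹) * ∑ i ∈ range (n + 1), (qq ^ 2) ^ i) = psiCoeff n := by
  have hq := qq_ne_zero
  have hsum :
      (qq - qq⁻¹) * ∑ i ∈ range (n + 1), (qq ^ 2) ^ i = qq⁻¹ * (qq ^ (2 * (n + 1)) - 1) := by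
    rw [pow_mul, ← geom_sum_mul]
    field_simp
  have hfac (j : ℕ) : (1 : Kq) - qq ^ (2 * (j + 1)) ≠ 0 :=
    sub_ne_zero.mpr (qq_pow_ne_one (by omega)).symm
  have hprod : ∏ j ∈ range n, (1 - qq ^ (2 * (j + 1))) ≠ 0 :=
    Finset.prod_ne_zero_iff.mpr fun j _ ↦ hfac j
  rw [hsum, psiCoeff, psiCoeff, Finset.prod_range_succ]
  field_simp [hfac n]
  ring

/-- Generalized conjugation identity: `Ψ^q(v)⁻¹ u Ψ^q(v) = u + c` and
`Ψ^q(u) v Ψ^q(u)⁻¹ = v + c` where `c = (uv - vu)/(q - q⁻¹)`. -/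
theorem quantum_dilogarithm_generalized_conjugation {A : Type} [Ring A] [Algebra Kq A]
    (u v : A)
    (c : A) (hc : c = (qq - qq⁻¹)⁻¹ • (u * v - v * u))
    (huc : u * c = (qq ^ 2) • (c * u))
    (hcv : c * v = (qq ^ 2) • (v * c)) :
    ((PowerSeries.C (R := A)) u) * Psi v
        = Psi v * ((PowerSeries.C (R := A)) u + PowerSeries.X * (PowerSeries.C (R := A)) c) ∧
    Psi u * ((PowerSeries.C (R := A)) v)
        = ((PowerSeries.C (R := A)) v + PowerSeries.X * (PowerSeries.C (R := A)) c) * Psi u := by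
  have huv : u * v = v * u + (qq - qq⁻¹) • c := by
    rw [hc, smul_smul, mul_inv_cancel₀ qq_sub_inv_ne_zero, one_smul]
    abel
  exact ⟨C_mul_mk_smul_pow huv hcv psiCoeff_succ_mul, mk_smul_pow_mul_C huv huc psiCoeff_succ_mul⟩

end
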